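/- Let d(l,n) := 1 - n!/(n^l(n-l)!), and D(η,n) := ∑_{l=0}^n C(n,l) η^l (1-η)^{n-l} d(l,n). Then for every δ ∈ (0,1], D(η,n) ≥ d(⌈ηn(1-δ)⌉, n) · (1 - exp(-δ²ηn/2)). -/

import Mathlib

/-- `dsep l n = 1 - n!/(n^l (n-l)!)`. -/
noncomputable def dsep (l n : ℕ) : ℝ :=
  1 - (Nat.factorial n : ℝ) / ((n : ℝ) ^ l * (Nat.factorial (n - l) : ℝ))

/-- The binomial average `D(η,n)` of `dsep`. -/
noncomputable def Dsep (η : ℝ) (n : ℕ) : ℝ :=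
  ∑ l ∈ Finset.range (n + 1),
    (Nat.choose n l : ℝ) * η ^ l * (1 - η) ^ (n - l) * dsep l n

/-!
By Chernoff's bound, `Bin(n, η)` puts mass at least `1 - exp(-δ²ηn/2)` on
`{l ≥ ⌈ηn(1-δ)⌉}`, and there `d(l, n) ≥ d(⌈ηn(1-δ)⌉, n)` because `n^l (n-l)!` increases
with `l ≤ n`; since `d ≥ 0`, the rest of the average can be dropped. The Chernoff bound is
the exponential-moment argument with `e^{-t} = 1 - δ`, which ends with
`-x log x ≤ (1 - x²)/2` on `(0, 1]`, i.e. `t ≤ sinh t` for `t ≥ 0`.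
-/

open Finset Real
open scoped Nat

theorem pow_mul_factorial_sub_le_of_le {n k l : ℕ} (hkl : k ≤ l) (hln : l ≤ n) :
    n ^ k * (n - k)! ≤ n ^ l * (n - l)! := by
  have hsplit : (n - k)! = (n - l)! * (n - k).descFactorial (l - k) := by
    rw [← Nat.factorial_mul_descFactorial (by omega : l - k ≤ n - k)]
    congr 2
    omega
  have hdesc : (n - k).descFactorial (l - k) ≤ n ^ (l - k) :=
    (Nat.descFactorial_le_pow _ _).trans (Nat.pow_le_pow_left (Nat.sub_le n k) _)
  calc n ^ k * (n - k)! = n ^ k * (n - l)! * (n - k).descFactorial (l - k) := by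
        rw [hsplit, mul_assoc]
    _ ≤ n ^ k * (n - l)! * n ^ (l - k) := by gcongr
    _ = n ^ l * (n - l)! := by rw [mul_right_comm, ← pow_add, Nat.add_sub_cancel' hkl]

theorem dsep_monotoneOn (n : ℕ) : MonotoneOn (dsep · n) (Set.Iic n) := by
  intro k hk l hl hkl
  have hpos : (0 : ℝ) < n ^ k * (n - k)! := by
    have : n ^ k ≠ 0 := by
      rw [Ne, pow_eq_zero_iff']
      exact fun h => h.2 (by simpa [h.1] using hk)
    exact_mod_cast Nat.mul_pos (Nat.pos_of_ne_zero this) (Nat.factorial_pos _)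
  have hle : (n : ℝ) ^ k * (n - k)! ≤ n ^ l * (n - l)! := by
    exact_mod_cast pow_mul_factorial_sub_le_of_le hkl hl
  exact sub_le_sub_left (div_le_div_of_nonneg_left (by positivity) hpos hle) 1

theorem dsep_zero_left (n : ℕ) : dsep 0 n = 0 := by
  simp [dsep, (Nat.factorial_pos n).ne']

theorem dsep_nonneg {l n : ℕ} (hl : l ≤ n) : 0 ≤ dsep l n :=
  dsep_zero_left n ▸ dsep_monotoneOn n (Nat.zero_le n) hl (Nat.zero_le l)

/-- The probability that `Bin(n, η)` takes the value `l`. -/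
noncomputable def binomialWeight (η : ℝ) (n l : ℕ) : ℝ :=
  n.choose l * η ^ l * (1 - η) ^ (n - l)

theorem binomialWeight_nonneg {η : ℝ} (hη0 : 0 ≤ η) (hη1 : η ≤ 1) (n l : ℕ) :
    0 ≤ binomialWeight η n l := by
  have := sub_nonneg.2 hη1
  unfold binomialWeight
  positivity

theorem sum_binomialWeight_mul_pow (η x : ℝ) (n : ℕ) :
    ∑ l ∈ range (n + 1), binomialWeight η n l * x ^ l = (η * x + (1 - η)) ^ n := by
  rw [add_pow]
  refine sum_congr rfl fun l _ => ?_
  unfold binomialWeight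
  ring

theorem sum_binomialWeight (η : ℝ) (n : ℕ) : ∑ l ∈ range (n + 1), binomialWeight η n l = 1 := by
  simpa using sum_binomialWeight_mul_pow η 1 n

theorem neg_mul_log_le_one_sub_sq_div_two {x : ℝ} (hx0 : 0 < x) (hx1 : x ≤ 1) :
    -(x * log x) ≤ (1 - x ^ 2) / 2 := by
  have hsinh : -log x ≤ sinh (-log x) := self_le_sinh_iff.2 (neg_nonneg.2 (log_nonpos hx0.le hx1))
  rw [sinh_eq, neg_neg, exp_log hx0, exp_neg, exp_log hx0] at hsinh
  calc -(x * log x) = x * -log x := by ring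
    _ ≤ x * ((x⁻¹ - x) / 2) := mul_le_mul_of_nonneg_left hsinh hx0.le
    _ = (1 - x ^ 2) / 2 := by field_simp

theorem sum_binomialWeight_lt_ceil_le_exp {η δ : ℝ} (n : ℕ) (hη0 : 0 ≤ η) (hη1 : η ≤ 1)
    (hδ0 : 0 ≤ δ) :
    ∑ l ∈ range (n + 1) with l < ⌈η * n * (1 - δ)⌉₊, binomialWeight η n l ≤
      exp (-(δ ^ 2 * η * n) / 2) := by
  set a := η * n * (1 - δ)
  rcases le_or_gt 1 δ with hδ1 | hδ1
  · have : ⌈a⌉₊ = 0 :=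
      Nat.ceil_eq_zero.2 (mul_nonpos_of_nonneg_of_nonpos (by positivity) (by linarith))
    simp only [this, Nat.not_lt_zero, filter_false, sum_empty]
    positivity
  set x := 1 - δ
  have hx0 : 0 < x := by linarith
  have hlogx : log x ≤ 0 := log_nonpos hx0.le (by linarith)
  -- exponential tilting: `x ^ l / x ^ a ≥ 1` for `l < a`
  have htilt : ∀ l : ℕ, (l : ℝ) < a → 1 ≤ exp (-log x * a) * x ^ l := fun l hl => by
    rw [← exp_log hx0, ← exp_nat_mul, exp_log hx0, ← exp_add]
    exact one_le_exp (by nlinarith)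
  have hbase : η * x + (1 - η) ≤ exp (-(η * δ)) := by
    linarith [add_one_le_exp (-(η * δ))]
  calc ∑ l ∈ range (n + 1) with l < ⌈a⌉₊, binomialWeight η n l
      ≤ ∑ l ∈ range (n + 1) with l < ⌈a⌉₊,
          binomialWeight η n l * (exp (-log x * a) * x ^ l) :=
        sum_le_sum fun l hl => le_mul_of_one_le_right (binomialWeight_nonneg hη0 hη1 n l)
          (htilt l (Nat.lt_ceil.1 (mem_filter.1 hl).2))
    _ ≤ ∑ l ∈ range (n + 1), binomialWeight η n l * (exp (-log x * a) * x ^ l) :=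
        sum_le_sum_of_subset_of_nonneg (filter_subset _ _) fun l _ _ =>
          mul_nonneg (binomialWeight_nonneg hη0 hη1 n l) (by positivity)
    _ = exp (-log x * a) * (η * x + (1 - η)) ^ n := by
        rw [← sum_binomialWeight_mul_pow, mul_sum]
        exact sum_congr rfl fun l _ => by ring
    _ ≤ exp (-log x * a) * exp (-(η * δ)) ^ n := by gcongr
    _ = exp (η * n * (-(x * log x) - δ)) := by
        rw [← exp_nat_mul, ← exp_add]
        congr 1
        simp only [a, x]
        ring
    _ ≤ exp (-(δ ^ 2 * η * n) / 2) := by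
        gcongr
        calc η * n * (-(x * log x) - δ) ≤ η * n * ((1 - x ^ 2) / 2 - δ) := by
              gcongr
              exact neg_mul_log_le_one_sub_sq_div_two hx0 (by linarith)
          _ = -(δ ^ 2 * η * n) / 2 := by simp only [x]; ring

theorem dsep_mul_sum_binomialWeight_le_Dsep {η : ℝ} {k n : ℕ} (hη0 : 0 ≤ η) (hη1 : η ≤ 1)
    (hk : k ≤ n) :
    dsep k n * ∑ l ∈ range (n + 1) with k ≤ l, binomialWeight η n l ≤ Dsep η n := by
  change _ ≤ ∑ l ∈ range (n + 1), binomialWeight η n l * dsep l n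
  rw [← sum_filter_add_sum_filter_not (range (n + 1)) (k ≤ ·), mul_sum]
  refine le_add_of_le_of_nonneg (sum_le_sum fun l hl => ?_) (sum_nonneg fun l hl => ?_)
  · obtain ⟨hln, hkl⟩ := mem_filter.1 hl
    rw [mul_comm]
    exact mul_le_mul_of_nonneg_left
      (dsep_monotoneOn n hk (Nat.lt_succ_iff.1 (mem_range.1 hln)) hkl)
      (binomialWeight_nonneg hη0 hη1 n l)
  · exact mul_nonneg (binomialWeight_nonneg hη0 hη1 n l)
      (dsep_nonneg (Nat.lt_succ_iff.1 (mem_range.1 (mem_filter.1 hl).1)))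

theorem Dsep_lower_bound_general (n : ℕ) (η δ : ℝ)
    (hη0 : 0 ≤ η) (hη1 : η ≤ 1) (hδ0 : 0 < δ) :
    Dsep η n ≥ dsep ⌈η * n * (1 - δ)⌉₊ n * (1 - Real.exp (-(δ ^ 2 * η * n) / 2)) := by
  set k := ⌈η * n * (1 - δ)⌉₊
  have hkn : k ≤ n := Nat.ceil_le.2 (by
    have hn0 : (0 : ℝ) ≤ n := n.cast_nonneg
    nlinarith [mul_nonneg (mul_nonneg hη0 hn0) hδ0.le, mul_le_mul_of_nonneg_right hη1 hn0])
  have hlower := sum_binomialWeight_lt_ceil_le_exp n hη0 hη1 hδ0.le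
  have htotal := sum_filter_add_sum_filter_not (range (n + 1)) (· < k) (binomialWeight η n)
  simp only [sum_binomialWeight, not_lt] at htotal
  calc dsep k n * (1 - exp (-(δ ^ 2 * η * n) / 2))
      ≤ dsep k n * ∑ l ∈ range (n + 1) with k ≤ l, binomialWeight η n l :=
        mul_le_mul_of_nonneg_left (by linarith) (dsep_nonneg hkn)
    _ ≤ Dsep η n := dsep_mul_sum_binomialWeight_le_Dsep hη0 hη1 hkn

theorem Dsep_lower_bound (n : ℕ) (hn : 1 ≤ n) (η δ : ℝ)
    (hη0 : 0 ≤ η) (hη1 : η ≤ 1) (hδ0 : 0 < δ) (hδ1 : δ ≤ 1) :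
    Dsep η n ≥ dsep ⌈η * n * (1 - δ)⌉₊ n * (1 - Real.exp (-(δ ^ 2 * η * n) / 2)) :=
  Dsep_lower_bound_general n η δ hη0 hη1 hδ0
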